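/- arXiv:0902.3430 — 3 statements merged into one kernel-verified Lean document; each statement's English description precedes it below -/
import Mathlib

section
/- By the triangle inequality for discrepancy, with probability at least 1 − δ over samples S (size m, from Q) and T (size n, from P), disc_{Lq}(P, Q) ≤ disc_{Lq}(P̂, Q̂) + 4q(R̂_S(H) + R̂_T(H)) + 3M(√(log(4/δ)/(2m)) + √(log(4/δ)/(2n))). -/
/-!
The population discrepancy is a supremum of deterministic numbers, so a single pair `(h, h')`
attains it up to `2M (sₘ + sₙ)`, where `sₖ = √(log (4/δ) / (2k))`. For the one loss
`|h - h'|^q`, with values in `[0, M]`, Hoeffding's inequality keeps both empirical means within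
`M sₘ` and `M sₙ` of their expectations except on events of probability `δ/2` each; on the
remaining event the triangle inequality bounds the discrepancy at `(h, h')`, hence the population
discrepancy, by the empirical discrepancy plus `3M (sₘ + sₙ)`. The Rademacher terms are
nonnegative and only weaken the bound.
-/

open MeasureTheory
open scoped BigOperators

/-- Empirical Rademacher complexity of a class `F` of real-valued functions
on a sample `S`. -/
noncomputable def empRad {Z : Type*} (m : ℕ) (S : Fin m → Z) (F : Set (Z → ℝ)) : ℝ :=
  (2 / (m : ℝ)) * ((1 / 2 ^ m) * ∑ σ : Fin m → Bool,
    ⨆ f : F, |∑ i, (if σ i then (1 : ℝ) else -1) * (f : Z → ℝ) (S i)|)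

open ProbabilityTheory Real

section Hoeffding

variable {X : Type*} [MeasurableSpace X] (P : Measure X) [IsProbabilityMeasure P]
  {g : X → ℝ} {a b : ℝ}

lemma measureReal_sum_sub_integral_ge_le (hg : Measurable g) (hab : ∀ x, g x ∈ Set.Icc a b)
    (n : ℕ) {ε : ℝ} (hε : 0 ≤ ε) :
    (Measure.pi fun _ : Fin n => P).real {S | ε ≤ ∑ i, (g (S i) - ∫ x, g x ∂P)}
      ≤ exp (-2 * ε ^ 2 / (n * (b - a) ^ 2)) := by
  have hindep : iIndepFun (fun i (S : Fin n → X) => g (S i) - ∫ x, g x ∂P)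
      (Measure.pi fun _ => P) :=
    iIndepFun_pi (X := fun _ x => g x - ∫ x, g x ∂P) fun _ => (hg.sub_const _).aemeasurable
  have hsubG (i : Fin n) : HasSubgaussianMGF (fun S : Fin n → X => g (S i) - ∫ x, g x ∂P)
      ((‖b - a‖₊ / 2) ^ 2) (Measure.pi fun _ => P) := by
    have := hasSubgaussianMGF_of_mem_Icc (μ := Measure.pi fun _ : Fin n => P)
      (X := fun S => g (S i)) (hg.comp (measurable_pi_apply i)).aemeasurable
      (ae_of_all _ fun S => hab (S i))
    rwa [integral_comp_eval hg.aestronglyMeasurable] at this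
  refine (HasSubgaussianMGF.measure_sum_ge_le_of_iIndepFun hindep (s := Finset.univ)
    (fun i _ => hsubG i) hε).trans_eq ?_
  simp only [Finset.sum_const, Finset.card_univ, Fintype.card_fin, nsmul_eq_mul]
  push_cast
  rw [Real.norm_eq_abs, div_pow, sq_abs]
  generalize (b - a) ^ 2 = d
  ring_nf

lemma measureReal_abs_mean_sub_integral_ge_le (hg : Measurable g)
    (hab : ∀ x, g x ∈ Set.Icc a b) {n : ℕ} (hn : 0 < n) {c : ℝ} (hc : 0 ≤ c) :
    (Measure.pi fun _ : Fin n => P).real {S | c ≤ |(1 / (n : ℝ)) * ∑ i, g (S i) - ∫ x, g x ∂P|}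
      ≤ 2 * exp (-2 * n * c ^ 2 / (b - a) ^ 2) := by
  have hn' : (0 : ℝ) < n := by exact_mod_cast hn
  have hneg : ∀ x, -g x ∈ Set.Icc (-b) (-a) := fun x => ⟨neg_le_neg (hab x).2, neg_le_neg (hab x).1⟩
  have htail (ε : ℝ) : exp (-2 * (n * ε) ^ 2 / (n * (b - a) ^ 2))
      = exp (-2 * n * ε ^ 2 / (b - a) ^ 2) := by
    congr 1; field_simp
  have hsubset : {S : Fin n → X | c ≤ |(1 / (n : ℝ)) * ∑ i, g (S i) - ∫ x, g x ∂P|} ⊆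
      {S | n * c ≤ ∑ i, (g (S i) - ∫ x, g x ∂P)} ∪
        {S | n * c ≤ ∑ i, (-g (S i) - ∫ x, -g x ∂P)} := by
    intro S hS
    have hmean : (1 / (n : ℝ)) * ∑ i, g (S i) - ∫ x, g x ∂P
        = (1 / (n : ℝ)) * ∑ i, (g (S i) - ∫ x, g x ∂P) := by
      rw [Finset.sum_sub_distrib, Finset.sum_const, Finset.card_univ, Fintype.card_fin,
        nsmul_eq_mul]
      field_simp
    rw [Set.mem_ofPred_eq, hmean, abs_mul, abs_of_pos (by positivity), one_div, ← div_eq_inv_mul,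
      le_div_iff₀' hn', le_abs] at hS
    rcases hS with hS | hS
    · exact Or.inl hS
    · right
      simpa [integral_neg, ← sub_eq_neg_add, Finset.sum_neg_distrib] using hS
  calc _ ≤ _ := measureReal_mono hsubset
    _ ≤ _ := measureReal_union_le _ _
    _ ≤ exp (-2 * (n * c) ^ 2 / (n * (b - a) ^ 2)) +
          exp (-2 * (n * c) ^ 2 / (n * (-a - -b) ^ 2)) := by
      gcongr
      · exact measureReal_sum_sub_integral_ge_le P hg hab n (by positivity)
      · exact measureReal_sum_sub_integral_ge_le P hg.neg hneg n (by positivity)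
    _ = _ := by rw [neg_sub_neg, htail]; ring

lemma measure_abs_mean_sub_integral_ge_le (hg : Measurable g)
    (hab : ∀ x, g x ∈ Set.Icc a b) (hlt : a < b) {n : ℕ} (hn : 0 < n) {δ : ℝ} (hδ : 0 < δ)
    (hδ2 : δ ≤ 2) :
    (Measure.pi fun _ : Fin n => P)
        {S | (b - a) * √(log (2 / δ) / (2 * n)) ≤ |(1 / (n : ℝ)) * ∑ i, g (S i) - ∫ x, g x ∂P|}
      ≤ ENNReal.ofReal δ := by
  have hn' : (0 : ℝ) < n := by exact_mod_cast hn
  have hlog : 0 ≤ log (2 / δ) := log_nonneg ((one_le_div hδ).2 hδ2)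
  rw [← ofReal_measureReal]
  refine ENNReal.ofReal_le_ofReal ((measureReal_abs_mean_sub_integral_ge_le P hg hab hn
    (by have := sub_pos.2 hlt; positivity)).trans_eq ?_)
  have hexponent : -2 * n * ((b - a) * √(log (2 / δ) / (2 * n))) ^ 2 / (b - a) ^ 2
      = -log (2 / δ) := by
    rw [mul_pow, sq_sqrt (by positivity)]
    field_simp [(sub_pos.2 hlt).ne']
  rw [hexponent, exp_neg, exp_log (by positivity)]
  field_simp

end Hoeffding

lemma one_sub_add_le_measure_prod {α β : Type*} [MeasurableSpace α] [MeasurableSpace β]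
    {μ : Measure α} {ν : Measure β} [IsProbabilityMeasure μ] [IsProbabilityMeasure ν]
    {A : Set α} {B : Set β} {E : Set (α × β)} {a b : ENNReal} (hA : μ A ≤ a) (hB : ν B ≤ b)
    (hE : Aᶜ ×ˢ Bᶜ ⊆ E) :
    1 - (a + b) ≤ μ.prod ν E := by
  have hcompl : Eᶜ ⊆ A ×ˢ Set.univ ∪ Set.univ ×ˢ B := by
    intro p hp
    by_contra hAB
    simp only [Set.mem_union, Set.mem_prod, Set.mem_univ, and_true, true_and, not_or] at hAB
    exact hp (hE ⟨hAB.1, hAB.2⟩)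
  have hEc : μ.prod ν Eᶜ ≤ a + b :=
    calc μ.prod ν Eᶜ ≤ μ.prod ν (A ×ˢ Set.univ) + μ.prod ν (Set.univ ×ˢ B) :=
          (measure_mono hcompl).trans (measure_union_le _ _)
      _ = μ A + ν B := by simp only [Measure.prod_prod, measure_univ, mul_one, one_mul]
      _ ≤ a + b := add_le_add hA hB
  rw [tsub_le_iff_right]
  calc (1 : ENNReal) = μ.prod ν (E ∪ Eᶜ) := by rw [Set.union_compl_self, measure_univ]
    _ ≤ μ.prod ν E + μ.prod ν Eᶜ := measure_union_le _ _
    _ ≤ μ.prod ν E + (a + b) := by gcongr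

lemma one_sub_le_measure_prod_abs_mean_sub_integral_lt {X : Type*} [MeasurableSpace X]
    (Q P : Measure X) [IsProbabilityMeasure Q] [IsProbabilityMeasure P] {g : X → ℝ} {a b : ℝ}
    (hg : Measurable g) (hab : ∀ x, g x ∈ Set.Icc a b) (hlt : a < b) {m n : ℕ} (hm : 0 < m)
    (hn : 0 < n) {δ : ℝ} (hδ : 0 < δ) (hδ4 : δ ≤ 4) :
    ENNReal.ofReal (1 - δ) ≤
      ((Measure.pi fun _ : Fin m => Q).prod (Measure.pi fun _ : Fin n => P))
        {ST | |(1 / (m : ℝ)) * ∑ i, g (ST.1 i) - ∫ x, g x ∂Q|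
              < (b - a) * √(log (4 / δ) / (2 * m)) ∧
            |(1 / (n : ℝ)) * ∑ j, g (ST.2 j) - ∫ x, g x ∂P|
              < (b - a) * √(log (4 / δ) / (2 * n))} := by
  have h42 : 2 / (δ / 2) = 4 / δ := by field_simp; norm_num
  have hS := measure_abs_mean_sub_integral_ge_le Q hg hab hlt hm (half_pos hδ) (by linarith)
  have hT := measure_abs_mean_sub_integral_ge_le P hg hab hlt hn (half_pos hδ) (by linarith)
  rw [h42] at hS hT
  calc ENNReal.ofReal (1 - δ) = 1 - (ENNReal.ofReal (δ / 2) + ENNReal.ofReal (δ / 2)) := by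
        rw [← ENNReal.ofReal_add (by positivity) (by positivity), add_halves,
          ENNReal.ofReal_sub _ hδ.le, ENNReal.ofReal_one]
    _ ≤ _ := one_sub_add_le_measure_prod hS hT ?_
  rintro ST ⟨hS, hT⟩
  exact ⟨not_le.1 hS, not_le.1 hT⟩

lemma one_div_mul_sum_mem_Icc {n : ℕ} (hn : 0 < n) {w : Fin n → ℝ} {a b : ℝ}
    (hw : ∀ i, w i ∈ Set.Icc a b) : (1 / (n : ℝ)) * ∑ i, w i ∈ Set.Icc a b := by
  have hn' : (0 : ℝ) < n := by exact_mod_cast hn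
  have hsum : ∑ i, w i ∈ Set.Icc (n * a) (n * b) := by
    constructor
    · simpa using Finset.card_nsmul_le_sum Finset.univ w a fun i _ => (hw i).1
    · simpa using Finset.sum_le_card_nsmul Finset.univ w b fun i _ => (hw i).2
  rw [one_div, ← div_eq_inv_mul, Set.mem_Icc, le_div_iff₀' hn', div_le_iff₀' hn']
  exact hsum

lemma abs_one_div_mul_sum_sub_le {m n : ℕ} (hm : 0 < m) (hn : 0 < n) {v : Fin m → ℝ}
    {w : Fin n → ℝ} {M : ℝ} (hv : ∀ i, v i ∈ Set.Icc 0 M) (hw : ∀ j, w j ∈ Set.Icc 0 M) :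
    |(1 / (m : ℝ)) * ∑ i, v i - (1 / (n : ℝ)) * ∑ j, w j| ≤ M :=
  have hv' := one_div_mul_sum_mem_Icc hm hv
  have hw' := one_div_mul_sum_mem_Icc hn hw
  abs_sub_le_of_nonneg_of_le hv'.1 hv'.2 hw'.1 hw'.2

lemma ciSup_abs_sub_le_add {ι : Type*} {f g f' g' : ι → ℝ} {ε : ℝ} {i : ι}
    (hi : ⨆ j, |f j - g j| ≤ |f i - g i| + ε)
    (hbdd : BddAbove (Set.range fun j => |f' j - g' j|)) :
    ⨆ j, |f j - g j| ≤ (⨆ j, |f' j - g' j|) + |f' i - f i| + |g' i - g i| + ε := by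
  have htriangle : |f i - g i| ≤ |f' i - g' i| + |f' i - f i| + |g' i - g i| := by
    calc |f i - g i| = |(f' i - g' i) - (f' i - f i) + (g' i - g i)| := by ring_nf
      _ ≤ _ := (abs_add_le _ _).trans (by gcongr; exact abs_sub _ _)
  linarith [le_ciSup hbdd i]

lemma empRad_nonneg {Z : Type*} (m : ℕ) (S : Fin m → Z) (F : Set (Z → ℝ)) :
    0 ≤ empRad m S F := by
  unfold empRad
  have hsup (σ : Fin m → Bool) :
      0 ≤ ⨆ f : F, |∑ i, (if σ i then (1 : ℝ) else -1) * (f : Z → ℝ) (S i)| :=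
    Real.iSup_nonneg fun _ => abs_nonneg _
  have := Finset.sum_nonneg fun σ (_ : σ ∈ Finset.univ) => hsup σ
  positivity

theorem disc_Lq_two_sample_bound_general {X : Type*} [MeasurableSpace X]
    (Q P : Measure X) [IsProbabilityMeasure Q] [IsProbabilityMeasure P]
    (H : Set (X → ℝ)) (hmeas : ∀ h ∈ H, Measurable h)
    (q : ℕ) (M : ℝ) (hM : 0 < M)
    (hbd : ∀ h ∈ H, ∀ h' ∈ H, ∀ x, |h x - h' x| ^ q ≤ M)
    (m n : ℕ) (hm : 0 < m) (hn : 0 < n) (δ : ℝ) (hδ : 0 < δ) (hδ1 : δ < 1) :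
    ENNReal.ofReal (1 - δ) ≤
      ((Measure.pi fun _ : Fin m => Q).prod (Measure.pi fun _ : Fin n => P))
        {ST : (Fin m → X) × (Fin n → X) |
          (⨆ p : H × H,
            |(∫ x, |(p.1 : X → ℝ) x - (p.2 : X → ℝ) x| ^ q ∂P) -
              ∫ x, |(p.1 : X → ℝ) x - (p.2 : X → ℝ) x| ^ q ∂Q|) ≤
            (⨆ p : H × H,
              |(1 / (n : ℝ)) * (∑ j, |(p.1 : X → ℝ) (ST.2 j) - (p.2 : X → ℝ) (ST.2 j)| ^ q) -
                (1 / (m : ℝ)) * ∑ i, |(p.1 : X → ℝ) (ST.1 i) - (p.2 : X → ℝ) (ST.1 i)| ^ q|) +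
              4 * q * (empRad m ST.1 H + empRad n ST.2 H) +
              3 * M * (Real.sqrt (Real.log (4 / δ) / (2 * m)) +
                Real.sqrt (Real.log (4 / δ) / (2 * n)))} := by
  rcases isEmpty_or_nonempty H with hH | hH
  · refine (ENNReal.ofReal_le_one.2 (by linarith)).trans (le_of_eq ?_)
    rw [← measure_univ (μ := (Measure.pi fun _ : Fin m => Q).prod (Measure.pi fun _ : Fin n => P))]
    refine congrArg _ (Set.eq_univ_of_forall fun ST => ?_).symm
    simp only [Real.iSup_of_isEmpty, empRad, Finset.sum_const_zero, mul_zero, add_zero, zero_add,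
      Set.mem_ofPred_eq]
    positivity
  have hlog : 0 < log (4 / δ) := log_pos (by rw [lt_div_iff₀ hδ]; linarith)
  obtain ⟨p, hp⟩ := exists_lt_of_lt_ciSup (sub_lt_self (⨆ p : H × H,
    |(∫ x, |(p.1 : X → ℝ) x - (p.2 : X → ℝ) x| ^ q ∂P) -
      ∫ x, |(p.1 : X → ℝ) x - (p.2 : X → ℝ) x| ^ q ∂Q|)
    (by positivity : 0 < 2 * M * (√(log (4 / δ) / (2 * m)) + √(log (4 / δ) / (2 * n)))))
  have hloss (p : H × H) (x : X) : |(p.1 : X → ℝ) x - (p.2 : X → ℝ) x| ^ q ∈ Set.Icc 0 M :=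
    ⟨by positivity, hbd _ p.1.2 _ p.2.2 x⟩
  have hmeas_loss : Measurable fun x => |(p.1 : X → ℝ) x - (p.2 : X → ℝ) x| ^ q :=
    ((hmeas _ p.1.2).sub (hmeas _ p.2.2)).abs.pow_const q
  refine (one_sub_le_measure_prod_abs_mean_sub_integral_lt Q P hmeas_loss (hloss p) hM hm hn hδ
    (by linarith)).trans (measure_mono fun ST ⟨hS, hT⟩ => ?_)
  rw [sub_zero] at hS hT
  have hdisc := ciSup_abs_sub_le_add (sub_lt_iff_lt_add.1 hp).le
    (f' := fun p : H × H =>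
      (1 / (n : ℝ)) * ∑ j, |(p.1 : X → ℝ) (ST.2 j) - (p.2 : X → ℝ) (ST.2 j)| ^ q)
    (g' := fun p : H × H =>
      (1 / (m : ℝ)) * ∑ i, |(p.1 : X → ℝ) (ST.1 i) - (p.2 : X → ℝ) (ST.1 i)| ^ q)
    ⟨M, Set.forall_mem_range.2 fun p' =>
      abs_one_div_mul_sum_sub_le hn hm (fun j => hloss p' (ST.2 j)) (fun i => hloss p' (ST.1 i))⟩
  have hrad : 0 ≤ 4 * (q : ℝ) * (empRad m ST.1 H + empRad n ST.2 H) :=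
    mul_nonneg (by positivity) (add_nonneg (empRad_nonneg m ST.1 H) (empRad_nonneg n ST.2 H))
  rw [Set.mem_ofPred_eq]
  linarith

/-- with probability at least `1 - δ` over samples `S` (size `m`,
drawn i.i.d. from `Q`) and `T` (size `n`, drawn i.i.d. from `P`), for the `L_q`
loss with `H` bounded by `M`:
`disc(P, Q) ≤ disc(P̂, Q̂) + 4q (R̂_S(H) + R̂_T(H))
  + 3M (√(log(4/δ)/(2m)) + √(log(4/δ)/(2n)))`. -/
theorem disc_Lq_two_sample_bound {X : Type*} [MeasurableSpace X]
    (Q P : Measure X) [IsProbabilityMeasure Q] [IsProbabilityMeasure P]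
    (H : Set (X → ℝ)) (hmeas : ∀ h ∈ H, Measurable h)
    (hrange : ∀ h ∈ H, ∀ x, h x ∈ Set.Icc (0 : ℝ) 1)
    (q : ℕ) (hq : 1 ≤ q) (M : ℝ) (hM : 0 < M)
    (hbd : ∀ h ∈ H, ∀ h' ∈ H, ∀ x, |h x - h' x| ^ q ≤ M)
    (m n : ℕ) (hm : 0 < m) (hn : 0 < n) (δ : ℝ) (hδ : 0 < δ) (hδ1 : δ < 1) :
    ENNReal.ofReal (1 - δ) ≤
      ((Measure.pi fun _ : Fin m => Q).prod (Measure.pi fun _ : Fin n => P))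
        {ST : (Fin m → X) × (Fin n → X) |
          (⨆ p : H × H,
            |(∫ x, |(p.1 : X → ℝ) x - (p.2 : X → ℝ) x| ^ q ∂P) -
              ∫ x, |(p.1 : X → ℝ) x - (p.2 : X → ℝ) x| ^ q ∂Q|) ≤
            (⨆ p : H × H,
              |(1 / (n : ℝ)) * (∑ j, |(p.1 : X → ℝ) (ST.2 j) - (p.2 : X → ℝ) (ST.2 j)| ^ q) -
                (1 / (m : ℝ)) * ∑ i, |(p.1 : X → ℝ) (ST.1 i) - (p.2 : X → ℝ) (ST.1 i)| ^ q|) +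
              4 * q * (empRad m ST.1 H + empRad n ST.2 H) +
              3 * M * (Real.sqrt (Real.log (4 / δ) / (2 * m)) +
                Real.sqrt (Real.log (4 / δ) / (2 * n)))} :=
  disc_Lq_two_sample_bound_general Q P H hmeas q M hM hbd m n hm hn δ hδ hδ1
end

section
/- In one dimension with H the class of half-lines (prefixes and suffixes of [0,1]), the distribution Q' defined on the source points s_1 < … < s_{m0} by Q'(s_i) = n_i/n — where n_i is the number of target-sample points strictly between s_i and s_{i+1} (to the right of s_i) and n = Σ n_i — achieves discrepancy exactly equal to the lower bound max_{a∈U} P̂(a), and hence minimizes the empirical discrepancy over all distributions supported on the source points. -/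
open scoped BigOperators Classical

/-- The 0-1 loss on `Bool` labels. -/
def L01 (y y' : Bool) : ℝ := if y = y' then 0 else 1

/-- The one-dimensional hypothesis class of prefixes `[0,z]` and suffixes
`[z,1]` (as half-lines on `ℝ`). -/
def Hcl : Set (ℝ → Bool) :=
  {g | ∃ z : ℝ, g = fun x => decide (x ≤ z)} ∪ {g | ∃ z : ℝ, g = fun x => decide (z ≤ x)}

lemma iocIff (c w x : ℝ) (h : c ≤ w) : (¬(x ≤ c ↔ x ≤ w)) ↔ (c < x ∧ x ≤ w) := by
  by_cases h1 : x ≤ c <;> by_cases h2 : x ≤ w <;> simp [h1, h2] <;>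
    first | linarith | (constructor <;> linarith)
lemma icoIff (c w x : ℝ) (h : c ≤ w) : (¬(c ≤ x ↔ w ≤ x)) ↔ (c ≤ x ∧ x < w) := by
  by_cases h1 : c ≤ x <;> by_cases h2 : w ≤ x <;> simp [h1, h2] <;>
    first | linarith | (constructor <;> linarith)
lemma psIff1 (z1 z2 x : ℝ) (h : z1 < z2) : (¬(x ≤ z1 ↔ z2 ≤ x)) ↔ (x ≤ z1 ∨ z2 ≤ x) := by
  by_cases h1 : x ≤ z1 <;> by_cases h2 : z2 ≤ x <;> simp [h1, h2] <;>
    first | linarith | (constructor <;> linarith)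
lemma psIff2 (z1 z2 x : ℝ) (h : z2 ≤ z1) : (¬(x ≤ z1 ↔ z2 ≤ x)) ↔ (x < z2 ∨ z1 < x) := by
  constructor
  · intro h'
    rcases lt_or_ge x z2 with h'' | h''
    · exact Or.inl h''
    · refine Or.inr ?_
      by_contra hx
      push_neg at hx
      exact h' (iff_of_true hx h'')
  · rintro (h'' | h'') hiff
    · exact absurd (hiff.1 (by linarith)) (by linarith)
    · exact absurd (hiff.2 (by linarith)) (by linarith)

set_option maxHeartbeats 1000000 in
/-- in dimension one, the reweighting `Q'(s_i) = n_i / n`, where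
`n_i` is the number of target points whose closest source point on the left is
`s_i`, achieves discrepancy equal to the lower bound `max_{a ∈ U} P̂(a)` and
minimizes the empirical discrepancy over all distributions supported on the
source points. -/
theorem one_dim_disc_min (m0 n : ℕ) (hm0 : 0 < m0) (hn : 0 < n)
    (s : Fin m0 → ℝ) (hs : StrictMono s) (hs01 : ∀ i, s i ∈ Set.Icc (0 : ℝ) 1)
    (p : Fin n → ℝ) (hp01 : ∀ j, p j ∈ Set.Icc (0 : ℝ) 1)
    (hleft : ∀ j, s ⟨0, hm0⟩ < p j)              -- no target point left of `s_1`
    (hne : ∀ j i, p j ≠ s i) :            -- target points lie strictly between sources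
    -- number of target points directly to the right of `s i`
    let ni : Fin m0 → ℕ := fun i =>
      (Finset.univ.filter fun j : Fin n =>
        s i < p j ∧ ∀ k : Fin m0, s k < p j → k ≤ i).card
    -- the reweighted source distribution
    let Q' : Fin m0 → ℝ := fun i => (ni i : ℝ) / n
    -- empirical discrepancy of a source reweighting `w` versus `P̂`
    let discW : (Fin m0 → ℝ) → ℝ := fun w =>
      ⨆ q : Hcl × Hcl,
        |(∑ i, w i * L01 ((q.1 : ℝ → Bool) (s i)) ((q.2 : ℝ → Bool) (s i))) -
          (1 / (n : ℝ)) * ∑ j, L01 ((q.1 : ℝ → Bool) (p j)) ((q.2 : ℝ → Bool) (p j))|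
    -- unlabeled regions: regions of `HΔH` with no source point but a target point
    let U : Set (Set ℝ) :=
      {a | (∃ g ∈ Hcl, ∃ g' ∈ Hcl, a = {x | g x ≠ g' x}) ∧
        (∀ i, s i ∉ a) ∧ ∃ j, p j ∈ a}
    discW Q' = (⨆ a : U, (1 / (n : ℝ)) *
        ((Finset.univ.filter fun j : Fin n => p j ∈ (a : Set ℝ)).card : ℝ)) ∧
      ∀ w : Fin m0 → ℝ, (∀ i, 0 ≤ w i) → (∑ i, w i = 1) → discW Q' ≤ discW w := by
  intro ni Q' discW U
  classical
  have hdisc : ∀ w, discW w = ⨆ q : Hcl × Hcl,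
        |(∑ i, w i * L01 ((q.1 : ℝ → Bool) (s i)) ((q.2 : ℝ → Bool) (s i))) -
          (1 / (n : ℝ)) * ∑ j, L01 ((q.1 : ℝ → Bool) (p j)) ((q.2 : ℝ → Bool) (p j))| :=
    fun w => rfl
  have hQ : ∀ i, Q' i = (ni i : ℝ) / n := fun i => rfl
  have hni : ∀ i, ni i = (Finset.univ.filter fun j : Fin n =>
        s i < p j ∧ ∀ k : Fin m0, s k < p j → k ≤ i).card := fun i => rfl
  have hn' : (0:ℝ) < n := by exact_mod_cast hn
  set nxt : Fin m0 → ℝ := fun i => if h : (i:ℕ)+1 < m0 then s ⟨(i:ℕ)+1, h⟩ else 2 with hnxt_def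
  have hnxt_gt : ∀ i, s i < nxt i := by
    intro i
    rw [hnxt_def]
    by_cases h : (i:ℕ)+1 < m0
    · simp only [dif_pos h]
      exact hs (by simp [Fin.lt_def])
    · simp only [dif_neg h]
      linarith [(hs01 i).2]
  have hnxt_le : ∀ i k : Fin m0, (i:ℕ) < (k:ℕ) → nxt i ≤ s k := by
    intro i k hik
    rw [hnxt_def]
    by_cases h : (i:ℕ)+1 < m0
    · simp only [dif_pos h]
      exact hs.monotone (by simp [Fin.le_def]; omega)
    · exfalso; omega
  set G : Fin m0 → Finset (Fin n) :=
    fun i => Finset.univ.filter (fun j => s i < p j ∧ p j < nxt i) with hG_def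
  have hGmem : ∀ (j : Fin n) (i : Fin m0), j ∈ G i ↔ (s i < p j ∧ p j < nxt i) := by
    intro j i; simp [hG_def]
  have hGdisj : ∀ i k : Fin m0, i ≠ k → Disjoint (G i) (G k) := by
    have key : ∀ i k : Fin m0, (i:ℕ) < (k:ℕ) → Disjoint (G i) (G k) := by
      intro i k hik
      rw [Finset.disjoint_left]
      intro j hji hjk
      rw [hGmem] at hji hjk
      have := hnxt_le i k hik
      linarith [hji.2, hjk.1]
    intro i k hik
    rcases lt_trichotomy (i:ℕ) (k:ℕ) with h | h | h
    · exact key i k h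
    · exact absurd (Fin.ext h) hik
    · exact (key k i h).symm
  have hgap : ∀ (j : Fin n) (k : Fin m0), s k < p j → ∃ i, s k ≤ s i ∧ j ∈ G i := by
    intro j k hk
    set Fj : Finset (Fin m0) := Finset.univ.filter (fun i => s i < p j) with hFj
    have hFjne : Fj.Nonempty := ⟨k, by simp [hFj, hk]⟩
    obtain ⟨i, hiF, himax⟩ := Finset.exists_max_image Fj (fun i => (i:ℕ)) hFjne
    have hip : s i < p j := by simpa [hFj] using hiF
    refine ⟨i, ?_, ?_⟩
    · rcases eq_or_ne k i with rfl | hki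
      · exact le_refl _
      · have : (k:ℕ) ≤ (i:ℕ) := himax k (by simp [hFj, hk])
        exact hs.monotone (by rwa [Fin.le_def])
    · rw [hGmem]
      refine ⟨hip, ?_⟩
      rw [hnxt_def]
      by_cases h : (i:ℕ)+1 < m0
      · simp only [dif_pos h]
        have hnotin : ¬ s ⟨(i:ℕ)+1, h⟩ < p j := by
          intro hcon
          have := himax ⟨(i:ℕ)+1, h⟩ (by simp [hFj, hcon])
          simp at this
        have hle : p j ≤ s ⟨(i:ℕ)+1, h⟩ := not_lt.1 hnotin
        exact lt_of_le_of_ne hle (hne j _)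
      · simp only [dif_neg h]
        linarith [(hp01 j).2]
  -- counting notation
  set A : Set ℝ → Finset (Fin n) :=
    fun a => Finset.univ.filter (fun j => p j ∈ a) with hA_def
  have hAmem : ∀ (j : Fin n) (a : Set ℝ), j ∈ A a ↔ p j ∈ a := by
    intro j a; simp [hA_def]
  have hAcard : ∀ a : Set ℝ, ((A a).card : ℝ) ≤ n := by
    intro a
    have h1 : (A a).card ≤ (Finset.univ : Finset (Fin n)).card := Finset.card_le_univ _
    have h2 : (Finset.univ : Finset (Fin n)).card = n := by simp
    exact_mod_cast h2 ▸ h1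
  set Fs : Set ℝ → Finset (Fin m0) :=
    fun a => Finset.univ.filter (fun i => s i ∈ a) with hFs_def
  have hFsmem : ∀ (i : Fin m0) (a : Set ℝ), i ∈ Fs a ↔ s i ∈ a := by
    intro i a; simp [hFs_def]
  set D : ℝ := ⨆ a : U, (1 / (n : ℝ)) *
      ((Finset.univ.filter fun j : Fin n => p j ∈ (a : Set ℝ)).card : ℝ) with hD_def
  -- membership in U helpers
  have hIocU : ∀ c w : ℝ, c < w → (∀ k, ¬(c < s k ∧ s k ≤ w)) →
      (∃ j, p j ∈ Set.Ioc c w) → Set.Ioc c w ∈ U := by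
    intro c w hcw hks hj
    refine ⟨⟨fun x => decide (x ≤ c), Or.inl ⟨c, rfl⟩,
      fun x => decide (x ≤ w), Or.inl ⟨w, rfl⟩, ?_⟩, ?_, hj⟩
    · ext x
      simp only [Set.mem_Ioc, Set.mem_setOf_eq, ne_eq, decide_eq_decide]
      exact (iocIff c w x hcw.le).symm
    · intro i hi
      exact hks i ⟨hi.1, hi.2⟩
  have hIcoU : ∀ c w : ℝ, c < w → (∀ k, ¬(c ≤ s k ∧ s k < w)) →
      (∃ j, p j ∈ Set.Ico c w) → Set.Ico c w ∈ U := by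
    intro c w hcw hks hj
    refine ⟨⟨fun x => decide (c ≤ x), Or.inr ⟨c, rfl⟩,
      fun x => decide (w ≤ x), Or.inr ⟨w, rfl⟩, ?_⟩, ?_, hj⟩
    · ext x
      simp only [Set.mem_Ico, Set.mem_setOf_eq, ne_eq, decide_eq_decide]
      exact (icoIff c w x hcw.le).symm
    · intro i hi
      exact hks i ⟨hi.1, hi.2⟩
  have hDbdd : BddAbove (Set.range fun a : U => (1 / (n : ℝ)) *
      ((Finset.univ.filter fun j : Fin n => p j ∈ (a : Set ℝ)).card : ℝ)) := by
    refine ⟨1, ?_⟩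
    rintro x ⟨a, rfl⟩
    simp only
    have hcard : ((Finset.univ.filter fun j : Fin n => p j ∈ (a : Set ℝ)).card : ℝ) ≤ n := by
      have := Finset.card_filter_le (Finset.univ : Finset (Fin n))
        (fun j => p j ∈ (a : Set ℝ))
      have h2 : (Finset.univ : Finset (Fin n)).card = n := by simp
      exact_mod_cast h2 ▸ this
    calc (1 / (n:ℝ)) * ((Finset.univ.filter fun j : Fin n => p j ∈ (a : Set ℝ)).card : ℝ)
        ≤ (1 / (n:ℝ)) * n := by
          apply mul_le_mul_of_nonneg_left hcard; positivity
      _ = 1 := by field_simp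
  have hUle : ∀ b : Set ℝ, b ∈ U → (1 / (n : ℝ)) * ((A b).card : ℝ) ≤ D := by
    intro b hb
    rw [hD_def]
    exact le_ciSup hDbdd (⟨b, hb⟩ : U)
  have hUne : ∃ b, b ∈ U := by
    obtain ⟨i, _, hG0⟩ := hgap ⟨0, hn⟩ ⟨0, hm0⟩ (hleft ⟨0, hn⟩)
    rw [hGmem] at hG0
    refine ⟨Set.Ioc (s i) (p ⟨0, hn⟩), hIocU _ _ hG0.1 ?_ ⟨⟨0, hn⟩, hG0.1, le_refl _⟩⟩
    intro k ⟨hk1, hk2⟩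
    have hik : (i:ℕ) < (k:ℕ) := by
      rw [← Fin.lt_def]
      exact hs.lt_iff_lt.1 hk1
    linarith [hnxt_le i k hik, hG0.2]
  have hD0 : (0:ℝ) ≤ D := by
    obtain ⟨b, hb⟩ := hUne
    refine le_trans ?_ (hUle b hb)
    positivity
  have hpick : ∀ t : ℝ, ∃ u, t < u ∧ ∀ k : Fin m0, t < s k → u ≤ s k := by
    intro t
    rcases (Finset.univ.filter (fun k : Fin m0 => t < s k)).eq_empty_or_nonempty with h | h
    · refine ⟨t+1, by linarith, fun k hk => ?_⟩
      exfalso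
      have hmem : k ∈ Finset.univ.filter (fun k : Fin m0 => t < s k) :=
        Finset.mem_filter.2 ⟨Finset.mem_univ k, hk⟩
      rw [h] at hmem
      exact Finset.notMem_empty k hmem
    · obtain ⟨k0, hk0, hmin⟩ := Finset.exists_min_image _ s h
      have hk0t : t < s k0 := (Finset.mem_filter.1 hk0).2
      refine ⟨(t + s k0)/2, by linarith, fun k hk => ?_⟩
      have := hmin k (Finset.mem_filter.2 ⟨Finset.mem_univ k, hk⟩)
      linarith
  have hcov_le : ∀ (c : ℝ) (B : Finset (Fin n)), (∀ j ∈ B, c < p j) →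
      (∀ j ∈ B, ∀ k, c < s k → p j < s k) → (1 / (n : ℝ)) * (B.card : ℝ) ≤ D := by
    intro c B h1 h2
    rcases B.eq_empty_or_nonempty with hB | hB
    · simpa [hB] using hD0
    · obtain ⟨j0, hj0B, hj0max⟩ := Finset.exists_max_image B p hB
      have hbU : Set.Ioc c (p j0) ∈ U := by
        refine hIocU c (p j0) (h1 j0 hj0B) ?_ ⟨j0, h1 j0 hj0B, le_refl _⟩
        intro k ⟨hk1, hk2⟩
        exact absurd (h2 j0 hj0B k hk1) (not_lt.2 hk2)
      have hsub : B ⊆ A (Set.Ioc c (p j0)) := by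
        intro j hj
        exact (hAmem j _).2 ⟨h1 j hj, hj0max j hj⟩
      refine le_trans ?_ (hUle _ hbU)
      have : (B.card : ℝ) ≤ ((A (Set.Ioc c (p j0))).card : ℝ) := by
        exact_mod_cast Finset.card_le_card hsub
      have h1n : (0:ℝ) ≤ 1 / (n:ℝ) := by positivity
      exact mul_le_mul_of_nonneg_left this h1n
  have hcov_lt : ∀ (c : ℝ) (B : Finset (Fin n)), (∀ j ∈ B, c ≤ p j) →
      (∀ j ∈ B, ∀ k, c ≤ s k → p j < s k) → (1 / (n : ℝ)) * (B.card : ℝ) ≤ D := by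
    intro c B h1 h2
    rcases B.eq_empty_or_nonempty with hB | hB
    · simpa [hB] using hD0
    · obtain ⟨j0, hj0B, hj0max⟩ := Finset.exists_max_image B p hB
      obtain ⟨u, hu1, hu2⟩ := hpick (p j0)
      have hbU : Set.Ico c u ∈ U := by
        refine hIcoU c u (lt_of_le_of_lt (h1 j0 hj0B) hu1) ?_ ⟨j0, h1 j0 hj0B, hu1⟩
        intro k ⟨hk1, hk2⟩
        have := h2 j0 hj0B k hk1
        linarith [hu2 k this]
      have hsub : B ⊆ A (Set.Ico c u) := by
        intro j hj
        exact (hAmem j _).2 ⟨h1 j hj, lt_of_le_of_lt (hj0max j hj) hu1⟩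
      refine le_trans ?_ (hUle _ hbU)
      have : (B.card : ℝ) ≤ ((A (Set.Ico c u)).card : ℝ) := by
        exact_mod_cast Finset.card_le_card hsub
      have h1n : (0:ℝ) ≤ 1 / (n:ℝ) := by positivity
      exact mul_le_mul_of_nonneg_left this h1n
  -- `ni` agrees with the gap counts
  have hG_ni : ∀ i, ni i = (G i).card := by
    intro i
    rw [hni i, hG_def]
    simp only
    apply congrArg Finset.card
    apply Finset.filter_congr
    intro j _
    constructor
    · rintro ⟨h1, h2⟩
      refine ⟨h1, ?_⟩
      rw [hnxt_def]
      by_cases hh : (i:ℕ)+1 < m0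
      · simp only [dif_pos hh]
        by_contra hcon
        push_neg at hcon
        have hlt : s ⟨(i:ℕ)+1, hh⟩ < p j :=
          lt_of_le_of_ne hcon (Ne.symm (hne j _))
        have := h2 ⟨(i:ℕ)+1, hh⟩ hlt
        rw [Fin.le_def] at this
        have h' : (i:ℕ)+1 ≤ (i:ℕ) := this
        omega
      · simp only [dif_neg hh]
        linarith [(hp01 j).2]
    · rintro ⟨h1, h2⟩
      refine ⟨h1, fun k hk => ?_⟩
      by_contra hcon
      rw [Fin.le_def] at hcon
      push_neg at hcon
      have := hnxt_le i k hcon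
      linarith
  have hQsum : ∀ a : Set ℝ, (∑ i ∈ Fs a, Q' i) = ((((Fs a).biUnion G).card : ℝ)) / n := by
    intro a
    rw [Finset.card_biUnion (fun i _ k _ hik => hGdisj i k hik)]
    push_cast
    rw [Finset.sum_div]
    apply Finset.sum_congr rfl
    intro i _
    rw [hQ i, hG_ni i]
  -- the region of a pair of hypotheses
  have hval : ∀ (w : Fin m0 → ℝ) (q : Hcl × Hcl),
      |(∑ i, w i * L01 ((q.1 : ℝ → Bool) (s i)) ((q.2 : ℝ → Bool) (s i))) -
        (1 / (n : ℝ)) * ∑ j, L01 ((q.1 : ℝ → Bool) (p j)) ((q.2 : ℝ → Bool) (p j))| =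
      |(∑ i ∈ Fs {x | (q.1 : ℝ → Bool) x ≠ (q.2 : ℝ → Bool) x}, w i) -
        (1 / (n : ℝ)) * ((A {x | (q.1 : ℝ → Bool) x ≠ (q.2 : ℝ → Bool) x}).card : ℝ)| := by
    intro w q
    have h1 : (∑ i, w i * L01 ((q.1 : ℝ → Bool) (s i)) ((q.2 : ℝ → Bool) (s i)))
        = ∑ i ∈ Fs {x | (q.1 : ℝ → Bool) x ≠ (q.2 : ℝ → Bool) x}, w i := by
      rw [hFs_def]
      rw [Finset.sum_filter]
      apply Finset.sum_congr rfl
      intro i _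
      by_cases h : ((q.1 : ℝ → Bool) (s i)) = ((q.2 : ℝ → Bool) (s i))
      · simp [L01, h]
      · simp [L01, h]
    have h2 : (∑ j, L01 ((q.1 : ℝ → Bool) (p j)) ((q.2 : ℝ → Bool) (p j)))
        = ((A {x | (q.1 : ℝ → Bool) x ≠ (q.2 : ℝ → Bool) x}).card : ℝ) := by
      rw [hA_def]
      rw [← Finset.sum_boole]
      apply Finset.sum_congr rfl
      intro j _
      by_cases h : ((q.1 : ℝ → Bool) (p j)) = ((q.2 : ℝ → Bool) (p j))
      · simp [L01, h]
      · simp [L01, h]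
    rw [h1, h2]
  have hbdd : ∀ w : Fin m0 → ℝ, BddAbove (Set.range fun q : Hcl × Hcl =>
      |(∑ i, w i * L01 ((q.1 : ℝ → Bool) (s i)) ((q.2 : ℝ → Bool) (s i))) -
        (1 / (n : ℝ)) * ∑ j, L01 ((q.1 : ℝ → Bool) (p j)) ((q.2 : ℝ → Bool) (p j))|) := by
    intro w
    refine ⟨(∑ i, |w i|) + 1, ?_⟩
    have hsub : ∀ a : Set ℝ, |(∑ i ∈ Fs a, w i) - (1 / (n : ℝ)) * ((A a).card : ℝ)|
        ≤ (∑ i, |w i|) + 1 := by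
      intro a
      have habs : |(∑ i ∈ Fs a, w i) - (1 / (n : ℝ)) * ((A a).card : ℝ)|
          ≤ |∑ i ∈ Fs a, w i| + |(1 / (n : ℝ)) * ((A a).card : ℝ)| := by
        rw [sub_eq_add_neg]
        exact (abs_add_le _ _).trans_eq (by rw [abs_neg])
      refine habs.trans (add_le_add ?_ ?_)
      · refine (Finset.abs_sum_le_sum_abs _ _).trans ?_
        rw [hFs_def]
        apply Finset.sum_le_sum_of_subset_of_nonneg (Finset.filter_subset _ _)
        intro i _ _
        positivity
      · have hnn : (0:ℝ) ≤ (1/(n:ℝ)) * ((A a).card : ℝ) :=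
          mul_nonneg (by positivity) (Nat.cast_nonneg _)
        rw [abs_of_nonneg hnn]
        calc (1 / (n : ℝ)) * ((A a).card : ℝ) ≤ (1 / (n : ℝ)) * n :=
              mul_le_mul_of_nonneg_left (hAcard a) (by positivity)
          _ = 1 := by field_simp
    rintro x ⟨q, rfl⟩
    exact le_of_eq_of_le (hval w q) (hsub _)
  haveI hHne : Nonempty (Hcl × Hcl) :=
    ⟨⟨⟨fun x => decide (x ≤ 0), Or.inl ⟨0, rfl⟩⟩, ⟨fun x => decide (x ≤ 0), Or.inl ⟨0, rfl⟩⟩⟩⟩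
  haveI hUneT : Nonempty U := ⟨⟨hUne.choose, hUne.choose_spec⟩⟩
  have hge : ∀ w : Fin m0 → ℝ, D ≤ discW w := by
    intro w
    rw [hdisc w, hD_def]
    apply ciSup_le
    rintro ⟨b, ⟨g, hg, g', hg', hbeq⟩, hbs, hbp⟩
    set q : Hcl × Hcl := (⟨g, hg⟩, ⟨g', hg'⟩) with hq_def
    have haq : {x | (q.1 : ℝ → Bool) x ≠ (q.2 : ℝ → Bool) x} = b := hbeq.symm
    have hFsb : Fs {x | (q.1 : ℝ → Bool) x ≠ (q.2 : ℝ → Bool) x} = ∅ := by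
      rw [haq, hFs_def]
      exact Finset.filter_eq_empty_iff.2 (fun i _ => hbs i)
    have hvv : |(∑ i, w i * L01 ((q.1 : ℝ → Bool) (s i)) ((q.2 : ℝ → Bool) (s i))) -
        (1 / (n : ℝ)) * ∑ j, L01 ((q.1 : ℝ → Bool) (p j)) ((q.2 : ℝ → Bool) (p j))|
        = (1 / (n : ℝ)) * ((Finset.univ.filter fun j : Fin n => p j ∈ b).card : ℝ) := by
      rw [hval w q, hFsb, Finset.sum_empty, haq, zero_sub, abs_neg]
      have hnn : (0:ℝ) ≤ (1 / (n : ℝ)) * ((A b).card : ℝ) :=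
        mul_nonneg (by positivity) (Nat.cast_nonneg _)
      rw [abs_of_nonneg hnn]
    exact le_trans (le_of_eq hvv.symm) (le_ciSup (hbdd w) q)
  -- the master counting bound
  have hmaster : ∀ a : Set ℝ,
      ((1/(n:ℝ)) * ((((Fs a).biUnion G \ A a).card : ℝ)) ≤ D) →
      ((1/(n:ℝ)) * (((A a \ (Fs a).biUnion G).card : ℝ)) ≤ D) →
      |(∑ i ∈ Fs a, Q' i) - (1/(n:ℝ)) * ((A a).card : ℝ)| ≤ D := by
    intro a hB1 hB2
    rw [hQsum a]
    have e : ((((Fs a).biUnion G).card : ℝ))/n - (1/(n:ℝ)) * ((A a).card : ℝ)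
        = (1/(n:ℝ)) * (((((Fs a).biUnion G).card : ℝ)) - ((A a).card : ℝ)) := by ring
    rw [e, abs_le]
    have h1 : ((Fs a).biUnion G).card ≤ ((Fs a).biUnion G \ A a).card + (A a).card :=
      Finset.card_le_card_sdiff_add_card
    have h2 : (A a).card ≤ (A a \ (Fs a).biUnion G).card + ((Fs a).biUnion G).card :=
      Finset.card_le_card_sdiff_add_card
    have h1' : ((((Fs a).biUnion G).card : ℝ)) - ((A a).card : ℝ)
        ≤ (((Fs a).biUnion G \ A a).card : ℝ) := by
      have h1c : ((((Fs a).biUnion G).card : ℕ) : ℝ)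
          ≤ (((Fs a).biUnion G \ A a).card : ℝ) + ((A a).card : ℝ) := by
        exact_mod_cast h1
      linarith
    have h2' : ((A a).card : ℝ) - ((((Fs a).biUnion G).card : ℝ))
        ≤ ((A a \ (Fs a).biUnion G).card : ℝ) := by
      have h2c : (((A a).card : ℕ) : ℝ)
          ≤ ((A a \ (Fs a).biUnion G).card : ℝ) + ((((Fs a).biUnion G).card : ℕ) : ℝ) := by
        exact_mod_cast h2
      linarith
    have h1n : (0:ℝ) ≤ 1 / (n:ℝ) := by positivity
    constructor
    · have : (1/(n:ℝ)) * (((A a).card : ℝ) - ((((Fs a).biUnion G).card : ℝ)))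
          ≤ D := le_trans (mul_le_mul_of_nonneg_left h2' h1n) hB2
      linarith
    · exact le_trans (mul_le_mul_of_nonneg_left h1' h1n) hB1
    -- eliminators for the two error sets
  have hB1elim : ∀ (a : Set ℝ) (j : Fin n), j ∈ (Fs a).biUnion G \ A a →
      ∃ i, s i ∈ a ∧ s i < p j ∧ p j < nxt i ∧ p j ∉ a := by
    intro a j hj
    rw [Finset.mem_sdiff, Finset.mem_biUnion] at hj
    obtain ⟨⟨i, hiF, hjG⟩, hjA⟩ := hj
    rw [hGmem] at hjG
    exact ⟨i, (hFsmem i a).1 hiF, hjG.1, hjG.2, fun h => hjA ((hAmem j a).2 h)⟩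
  have hB2elim : ∀ (a : Set ℝ) (j : Fin n), j ∈ A a \ (Fs a).biUnion G →
      p j ∈ a ∧ ∀ i, s i ∈ a → ¬(s i < p j ∧ p j < nxt i) := by
    intro a j hj
    rw [Finset.mem_sdiff] at hj
    exact ⟨(hAmem j a).1 hj.1, fun i hia hcon => hj.2 (Finset.mem_biUnion.2
      ⟨i, (hFsmem i a).2 hia, (hGmem j i).2 hcon⟩)⟩
  have hvallt : ∀ i k : Fin m0, s i < s k → (i:ℕ) < (k:ℕ) :=
    fun i k h => (hs.lt_iff_lt.1 h : i < k)
  -- the four region shapes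
  have hshape1 : ∀ l r : ℝ,
      |(∑ i ∈ Fs (Set.Ioc l r), Q' i) - (1/(n:ℝ)) * ((A (Set.Ioc l r)).card : ℝ)| ≤ D := by
    intro l r
    apply hmaster
    · apply hcov_le r
      · intro j hj
        obtain ⟨i, hia, h1, h2, hpa⟩ := hB1elim _ j hj
        rw [Set.mem_Ioc] at hia hpa
        push_neg at hpa
        exact hpa (lt_trans hia.1 h1)
      · intro j hj k hk
        obtain ⟨i, hia, h1, h2, hpa⟩ := hB1elim _ j hj
        rw [Set.mem_Ioc] at hia
        exact lt_of_lt_of_le h2 (hnxt_le i k (hvallt i k (lt_of_le_of_lt hia.2 hk)))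
    · apply hcov_le l
      · intro j hj
        obtain ⟨hpa, -⟩ := hB2elim _ j hj
        exact hpa.1
      · intro j hj k hk
        obtain ⟨hpa, hno⟩ := hB2elim _ j hj
        by_contra hcon
        push_neg at hcon
        have hlt : s k < p j := lt_of_le_of_ne hcon (Ne.symm (hne j k))
        obtain ⟨i, hki, hjG⟩ := hgap j k hlt
        rw [hGmem] at hjG
        exact hno i ⟨lt_of_lt_of_le hk hki, le_trans hjG.1.le hpa.2⟩ hjG
  have hshape2 : ∀ l r : ℝ,
      |(∑ i ∈ Fs (Set.Ico l r), Q' i) - (1/(n:ℝ)) * ((A (Set.Ico l r)).card : ℝ)| ≤ D := by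
    intro l r
    apply hmaster
    · apply hcov_lt r
      · intro j hj
        obtain ⟨i, hia, h1, h2, hpa⟩ := hB1elim _ j hj
        rw [Set.mem_Ico] at hia hpa
        push_neg at hpa
        exact hpa (le_trans hia.1 h1.le)
      · intro j hj k hk
        obtain ⟨i, hia, h1, h2, hpa⟩ := hB1elim _ j hj
        rw [Set.mem_Ico] at hia
        exact lt_of_lt_of_le h2 (hnxt_le i k (hvallt i k (lt_of_lt_of_le hia.2 hk)))
    · apply hcov_lt l
      · intro j hj
        obtain ⟨hpa, -⟩ := hB2elim _ j hj
        exact hpa.1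
      · intro j hj k hk
        obtain ⟨hpa, hno⟩ := hB2elim _ j hj
        by_contra hcon
        push_neg at hcon
        have hlt : s k < p j := lt_of_le_of_ne hcon (Ne.symm (hne j k))
        obtain ⟨i, hki, hjG⟩ := hgap j k hlt
        rw [hGmem] at hjG
        exact hno i ⟨le_trans hk hki, lt_trans hjG.1 hpa.2⟩ hjG
  have hshape3 : ∀ l r : ℝ,
      |(∑ i ∈ Fs {x : ℝ | x ≤ l ∨ r ≤ x}, Q' i) -
        (1/(n:ℝ)) * ((A {x : ℝ | x ≤ l ∨ r ≤ x}).card : ℝ)| ≤ D := by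
    intro l r
    apply hmaster
    · apply hcov_le l
      · intro j hj
        obtain ⟨i, hia, h1, h2, hpa⟩ := hB1elim _ j hj
        rw [Set.mem_setOf_eq] at hpa
        push_neg at hpa
        exact hpa.1
      · intro j hj k hk
        obtain ⟨i, hia, h1, h2, hpa⟩ := hB1elim _ j hj
        rw [Set.mem_setOf_eq] at hia hpa
        push_neg at hpa
        rcases hia with hia | hia
        · exact lt_of_lt_of_le h2 (hnxt_le i k (hvallt i k (lt_of_le_of_lt hia hk)))
        · exfalso; linarith [hpa.2]
    · apply hcov_lt r
      · intro j hj
        obtain ⟨hpa, hno⟩ := hB2elim _ j hj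
        rw [Set.mem_setOf_eq] at hpa
        rcases hpa with h | h
        · exfalso
          obtain ⟨i, h0i, hjG⟩ := hgap j ⟨0, hm0⟩ (hleft j)
          rw [hGmem] at hjG
          exact hno i (Or.inl (le_trans hjG.1.le h)) hjG
        · exact h
      · intro j hj k hk
        obtain ⟨hpa, hno⟩ := hB2elim _ j hj
        by_contra hcon
        push_neg at hcon
        have hlt : s k < p j := lt_of_le_of_ne hcon (Ne.symm (hne j k))
        obtain ⟨i, hki, hjG⟩ := hgap j k hlt
        rw [hGmem] at hjG
        exact hno i (Or.inr (le_trans hk hki)) hjG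
  have hshape4 : ∀ l r : ℝ,
      |(∑ i ∈ Fs {x : ℝ | x < l ∨ r < x}, Q' i) -
        (1/(n:ℝ)) * ((A {x : ℝ | x < l ∨ r < x}).card : ℝ)| ≤ D := by
    intro l r
    apply hmaster
    · apply hcov_lt l
      · intro j hj
        obtain ⟨i, hia, h1, h2, hpa⟩ := hB1elim _ j hj
        rw [Set.mem_setOf_eq] at hpa
        push_neg at hpa
        exact hpa.1
      · intro j hj k hk
        obtain ⟨i, hia, h1, h2, hpa⟩ := hB1elim _ j hj
        rw [Set.mem_setOf_eq] at hia hpa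
        push_neg at hpa
        rcases hia with hia | hia
        · exact lt_of_lt_of_le h2 (hnxt_le i k (hvallt i k (lt_of_lt_of_le hia hk)))
        · exfalso; linarith [hpa.2]
    · apply hcov_le r
      · intro j hj
        obtain ⟨hpa, hno⟩ := hB2elim _ j hj
        rw [Set.mem_setOf_eq] at hpa
        rcases hpa with h | h
        · exfalso
          obtain ⟨i, h0i, hjG⟩ := hgap j ⟨0, hm0⟩ (hleft j)
          rw [hGmem] at hjG
          exact hno i (Or.inl (lt_trans hjG.1 h)) hjG
        · exact h
      · intro j hj k hk
        obtain ⟨hpa, hno⟩ := hB2elim _ j hj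
        by_contra hcon
        push_neg at hcon
        have hlt : s k < p j := lt_of_le_of_ne hcon (Ne.symm (hne j k))
        obtain ⟨i, hki, hjG⟩ := hgap j k hlt
        rw [hGmem] at hjG
        exact hno i (Or.inr (lt_of_lt_of_le hk hki)) hjG
  -- every region of a pair of hypotheses is handled by a shape
  have hregion : ∀ q : Hcl × Hcl,
      |(∑ i ∈ Fs {x | (q.1 : ℝ → Bool) x ≠ (q.2 : ℝ → Bool) x}, Q' i) -
        (1/(n:ℝ)) * ((A {x | (q.1 : ℝ → Bool) x ≠ (q.2 : ℝ → Bool) x}).card : ℝ)| ≤ D := by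
    rintro ⟨⟨g1, hg1⟩, ⟨g2, hg2⟩⟩
    show |(∑ i ∈ Fs {x | g1 x ≠ g2 x}, Q' i) -
        (1/(n:ℝ)) * ((A {x | g1 x ≠ g2 x}).card : ℝ)| ≤ D
    rcases hg1 with ⟨z1, rfl⟩ | ⟨z1, rfl⟩ <;> rcases hg2 with ⟨z2, rfl⟩ | ⟨z2, rfl⟩
    · have hset : {x : ℝ | (fun x => decide (x ≤ z1)) x ≠ (fun x => decide (x ≤ z2)) x}
          = Set.Ioc (min z1 z2) (max z1 z2) := by
        ext x
        simp only [Set.mem_setOf_eq, ne_eq, decide_eq_decide, Set.mem_Ioc]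
        rcases le_total z1 z2 with h | h
        · rw [min_eq_left h, max_eq_right h]; exact iocIff z1 z2 x h
        · rw [min_eq_right h, max_eq_left h]
          exact (not_congr Iff.comm).trans (iocIff z2 z1 x h)
      rw [hset]; exact hshape1 _ _
    · rcases lt_or_ge z1 z2 with hz | hz
      · have hset : {x : ℝ | (fun x => decide (x ≤ z1)) x ≠ (fun x => decide (z2 ≤ x)) x}
            = {x : ℝ | x ≤ z1 ∨ z2 ≤ x} := by
          ext x
          simp only [Set.mem_setOf_eq, ne_eq, decide_eq_decide]
          exact psIff1 z1 z2 x hz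
        rw [hset]; exact hshape3 z1 z2
      · have hset : {x : ℝ | (fun x => decide (x ≤ z1)) x ≠ (fun x => decide (z2 ≤ x)) x}
            = {x : ℝ | x < z2 ∨ z1 < x} := by
          ext x
          simp only [Set.mem_setOf_eq, ne_eq, decide_eq_decide]
          exact psIff2 z1 z2 x hz
        rw [hset]; exact hshape4 z2 z1
    · rcases lt_or_ge z2 z1 with hz | hz
      · have hset : {x : ℝ | (fun x => decide (z1 ≤ x)) x ≠ (fun x => decide (x ≤ z2)) x}
            = {x : ℝ | x ≤ z2 ∨ z1 ≤ x} := by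
          ext x
          simp only [Set.mem_setOf_eq, ne_eq, decide_eq_decide]
          exact (not_congr Iff.comm).trans (psIff1 z2 z1 x hz)
        rw [hset]; exact hshape3 z2 z1
      · have hset : {x : ℝ | (fun x => decide (z1 ≤ x)) x ≠ (fun x => decide (x ≤ z2)) x}
            = {x : ℝ | x < z1 ∨ z2 < x} := by
          ext x
          simp only [Set.mem_setOf_eq, ne_eq, decide_eq_decide]
          exact (not_congr Iff.comm).trans (psIff2 z2 z1 x hz)
        rw [hset]; exact hshape4 z1 z2
    · have hset : {x : ℝ | (fun x => decide (z1 ≤ x)) x ≠ (fun x => decide (z2 ≤ x)) x}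
          = Set.Ico (min z1 z2) (max z1 z2) := by
        ext x
        simp only [Set.mem_setOf_eq, ne_eq, decide_eq_decide, Set.mem_Ico]
        rcases le_total z1 z2 with h | h
        · rw [min_eq_left h, max_eq_right h]; exact icoIff z1 z2 x h
        · rw [min_eq_right h, max_eq_left h]
          exact (not_congr Iff.comm).trans (icoIff z2 z1 x h)
      rw [hset]; exact hshape2 _ _
  have hle : discW Q' ≤ D := by
    rw [hdisc Q']
    apply ciSup_le
    intro q
    exact le_of_eq_of_le (hval Q' q) (hregion q)
  exact ⟨le_antisymm hle (hge Q'), fun w _ _ => le_trans hle (hge w)⟩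
end

section
/- For H the set of linear functions {x ↦ wᵀx : ‖w‖ ≤ 1} on ℝ^N with the square loss, the discrepancy between P̂ and Q' equals the operator norm (largest absolute eigenvalue) of the symmetric matrix M(z) = Σ_{x∈S} (P̂(x) − Q'(x)) x xᵀ, i.e., sup_{‖w‖,‖w'‖≤1} |E_P̂[((w'−w)ᵀx)²] − E_Q'[((w'−w)ᵀx)²]| = max{λ_max(M(z)), λ_max(−M(z))} (up to the fixed scaling by 4 from the bound ‖u‖ ≤ 2). -/
open scoped BigOperators RealInnerProductSpace

/-!
The discrepancy integrand is the quadratic form `u ↦ ⟪u, M u⟫` of `M = M(z)` evaluated at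
`u = w - w'`. Expanding `u` in an orthonormal eigenbasis `(bᵢ)` of `M` gives
`⟪u, M u⟫ = ∑ λᵢ ⟪bᵢ, u⟫²`, so `|⟪u, M u⟫| ≤ (maxᵢ |λᵢ|) ‖u‖² ≤ 4 maxᵢ |λᵢ|` when `‖u‖ ≤ 2`,
and the bound is attained at `(w, w') = (bᵢ, -bᵢ)`.
-/

theorem max_ciSup_ciSup_neg_eq_ciSup_abs {ι : Type*} [Finite ι] (f : ι → ℝ) :
    max (⨆ i, f i) (⨆ i, -f i) = ⨆ i, |f i| := by
  simp only [abs_eq_max_neg]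
  exact (ciSup_sup_eq (Set.finite_range _).bddAbove (Set.finite_range _).bddAbove).symm

section Eigenbasis

variable {ι E : Type*} [Fintype ι] [NormedAddCommGroup E] [InnerProductSpace ℝ E]
  {T : E →ₗ[ℝ] E} {μ : ι → ℝ} {b : OrthonormalBasis ι ℝ E}

theorem inner_self_apply_eq_sum_of_eigenbasis (hb : ∀ i, T (b i) = μ i • b i) (u : E) :
    ⟪u, T u⟫ = ∑ i, μ i * ⟪b i, u⟫ ^ 2 := by
  have hTu : T u = ∑ i, (μ i * ⟪b i, u⟫) • b i := by
    conv_lhs => rw [← b.sum_repr' u]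
    simp only [map_sum, map_smul, hb, smul_smul, mul_comm]
  rw [hTu, inner_sum]
  refine Finset.sum_congr rfl fun i _ => ?_
  rw [real_inner_smul_right, real_inner_comm]
  ring

theorem abs_inner_self_apply_le_of_eigenbasis (hb : ∀ i, T (b i) = μ i • b i) (u : E) :
    |⟪u, T u⟫| ≤ (⨆ i, |μ i|) * ‖u‖ ^ 2 := by
  rw [inner_self_apply_eq_sum_of_eigenbasis hb, ← b.sum_sq_inner_right u, Finset.mul_sum]
  refine (Finset.abs_sum_le_sum_abs _ _).trans (Finset.sum_le_sum fun i _ => ?_)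
  rw [abs_mul, abs_sq]
  gcongr
  exact le_ciSup (Set.finite_range fun i => |μ i|).bddAbove i

theorem iSup_abs_inner_sub_apply_sub_eq_of_eigenbasis (hb : ∀ i, T (b i) = μ i • b i) :
    ⨆ q : {w : E // ‖w‖ ≤ 1} × {w : E // ‖w‖ ≤ 1},
      |⟪(q.1 : E) - q.2, T ((q.1 : E) - q.2)⟫| = 4 * ⨆ i, |μ i| := by
  have hμ : 0 ≤ ⨆ i, |μ i| := Real.iSup_nonneg fun i => abs_nonneg _
  have hle (q : {w : E // ‖w‖ ≤ 1} × {w : E // ‖w‖ ≤ 1}) :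
      |⟪(q.1 : E) - q.2, T ((q.1 : E) - q.2)⟫| ≤ 4 * ⨆ i, |μ i| := by
    have hq : ‖(q.1 : E) - q.2‖ ≤ 2 := (norm_sub_le _ _).trans (by linarith [q.1.2, q.2.2])
    calc _ ≤ (⨆ i, |μ i|) * ‖(q.1 : E) - q.2‖ ^ 2 := abs_inner_self_apply_le_of_eigenbasis hb _
      _ ≤ (⨆ i, |μ i|) * 2 ^ 2 := by gcongr
      _ = 4 * ⨆ i, |μ i| := by ring
  refine le_antisymm (Real.iSup_le hle (by linarith)) ?_
  rw [Real.mul_iSup_of_nonneg (by norm_num)]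
  refine Real.iSup_le (fun i => ?_) (Real.iSup_nonneg fun _ => abs_nonneg _)
  have hbi : ‖b i‖ = 1 := b.orthonormal.1 i
  refine le_ciSup_of_le ⟨_, Set.forall_mem_range.2 hle⟩
    (⟨b i, hbi.le⟩, ⟨-b i, (norm_neg (b i)).trans_le hbi.le⟩) (le_of_eq ?_)
  rw [sub_neg_eq_add, ← two_smul ℝ, map_smul, hb, real_inner_smul_left, real_inner_smul_right,
    real_inner_smul_right, real_inner_self_eq_norm_sq, hbi, one_pow, mul_one, abs_mul, abs_mul,
    abs_two]
  ring

end Eigenbasis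

theorem Matrix.IsHermitian.toEuclideanLin_eigenvectorBasis {n 𝕜 : Type*} [RCLike 𝕜] [Fintype n]
    [DecidableEq n] {A : Matrix n n 𝕜} (hA : A.IsHermitian) (i : n) :
    Matrix.toEuclideanLin A (hA.eigenvectorBasis i) = hA.eigenvalues i • hA.eigenvectorBasis i := by
  rw [Matrix.toLpLin_apply, hA.mulVec_eigenvectorBasis]
  rfl

theorem inner_toEuclideanLin_vecMulVec_self {n : Type*} [Fintype n] [DecidableEq n]
    (x u : EuclideanSpace ℝ n) :
    ⟪u, Matrix.toEuclideanLin (Matrix.vecMulVec (x : n → ℝ) (x : n → ℝ)) u⟫ = ⟪u, x⟫ ^ 2 := by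
  rw [Matrix.toLpLin_apply, Matrix.vecMulVec_mulVec]
  simp [EuclideanSpace.inner_eq_star_dotProduct, sq]

theorem inner_toEuclideanLin_sum_smul_vecMulVec_self {n : Type*} [Fintype n] [DecidableEq n]
    (S : Finset (EuclideanSpace ℝ n)) (c : EuclideanSpace ℝ n → ℝ) (u : EuclideanSpace ℝ n) :
    ⟪u, Matrix.toEuclideanLin
        (∑ x ∈ S, c x • Matrix.vecMulVec (x : n → ℝ) (x : n → ℝ)) u⟫ =
      ∑ x ∈ S, c x * ⟪u, x⟫ ^ 2 := by
  simp only [map_sum, map_smul, LinearMap.sum_apply, LinearMap.smul_apply, inner_sum,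
    real_inner_smul_right, inner_toEuclideanLin_vecMulVec_self]

theorem disc_square_loss_eq_spectral_general (N : ℕ)
    (S : Finset (EuclideanSpace ℝ (Fin N)))
    (Phat Q' : EuclideanSpace ℝ (Fin N) → ℝ)
    (Mz : Matrix (Fin N) (Fin N) ℝ)
    (hMz : Mz = ∑ x ∈ S, (Phat x - Q' x) • Matrix.vecMulVec (x : Fin N → ℝ) (x : Fin N → ℝ))
    (hHerm : Mz.IsHermitian) :
    (⨆ q : {w : EuclideanSpace ℝ (Fin N) // ‖w‖ ≤ 1} ×
        {w : EuclideanSpace ℝ (Fin N) // ‖w‖ ≤ 1},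
      |(∑ x ∈ S, Phat x * ⟪(q.1 : EuclideanSpace ℝ (Fin N)) - (q.2 : EuclideanSpace ℝ (Fin N)), x⟫ ^ 2) -
        ∑ x ∈ S, Q' x * ⟪(q.1 : EuclideanSpace ℝ (Fin N)) - (q.2 : EuclideanSpace ℝ (Fin N)), x⟫ ^ 2|) =
      4 * max (⨆ i, hHerm.eigenvalues i) (⨆ i, -hHerm.eigenvalues i) := by
  have hquad (u : EuclideanSpace ℝ (Fin N)) :
      (∑ x ∈ S, Phat x * ⟪u, x⟫ ^ 2) - ∑ x ∈ S, Q' x * ⟪u, x⟫ ^ 2 =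
        ⟪u, Matrix.toEuclideanLin Mz u⟫ := by
    simp only [hMz, inner_toEuclideanLin_sum_smul_vecMulVec_self, sub_mul, Finset.sum_sub_distrib]
  simp only [hquad]
  rw [iSup_abs_inner_sub_apply_sub_eq_of_eigenbasis hHerm.toEuclideanLin_eigenvectorBasis,
    max_ciSup_ciSup_neg_eq_ciSup_abs]

/-- for linear hypotheses `{x ↦ wᵀx : ‖w‖ ≤ 1}` on `ℝ^N` with the
square loss, the discrepancy between `P̂` and `Q'` equals (up to the factor `4`
arising from the substitution `u = w' − w`, `‖u‖ ≤ 2`) the spectral norm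
`max{λ_max(M(z)), λ_max(−M(z))}` of `M(z) = Σ_{x∈S} (P̂(x) − Q'(x)) x xᵀ`. -/
theorem disc_square_loss_eq_spectral (N : ℕ) [NeZero N]
    (S : Finset (EuclideanSpace ℝ (Fin N)))
    (Phat Q' : EuclideanSpace ℝ (Fin N) → ℝ)
    (hPhat : (∀ x, 0 ≤ Phat x) ∧ ∑ x ∈ S, Phat x = 1)
    (hQ' : (∀ x, 0 ≤ Q' x) ∧ ∑ x ∈ S, Q' x = 1)
    (Mz : Matrix (Fin N) (Fin N) ℝ)
    (hMz : Mz = ∑ x ∈ S, (Phat x - Q' x) • Matrix.vecMulVec (x : Fin N → ℝ) (x : Fin N → ℝ))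
    (hHerm : Mz.IsHermitian) :
    (⨆ q : {w : EuclideanSpace ℝ (Fin N) // ‖w‖ ≤ 1} ×
        {w : EuclideanSpace ℝ (Fin N) // ‖w‖ ≤ 1},
      |(∑ x ∈ S, Phat x * ⟪(q.1 : EuclideanSpace ℝ (Fin N)) - (q.2 : EuclideanSpace ℝ (Fin N)), x⟫ ^ 2) -
        ∑ x ∈ S, Q' x * ⟪(q.1 : EuclideanSpace ℝ (Fin N)) - (q.2 : EuclideanSpace ℝ (Fin N)), x⟫ ^ 2|) =
      4 * max (⨆ i, hHerm.eigenvalues i) (⨆ i, -hHerm.eigenvalues i) :=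
  disc_square_loss_eq_spectral_general N S Phat Q' Mz hMz hHerm
end
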